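/- For a single user (K = 1) with downlink power fixed at P_A, harvested energy E(τ^D) = η·h·P_A·τ^D, and uplink rate R(τ^D) = (1 − τ^D)·log(1 + (h·η·h·P_A·τ^D)/(N_0·(1 − τ^D))), the function R is concave on (0, 1). -/

import Mathlib

/-!
With `c = h η h P_A / N_0`, the rate is `R τ = (1 - τ) log (1 + c τ / (1 - τ))`, the perspective
`(x, t) ↦ t f (x / t)` of the concave function `f u = log (1 + c u)` evaluated along the segment
`τ ↦ (τ, 1 - τ)`. Perspectives of concave functions are concave, since `t f (x / t)` at a convex
combination of `(x, t)` and `(y, u)` is, after rescaling, a convex combination of `x / t` and `y / u`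
with weights proportional to `a t` and `b u`.
-/

open Set

section Perspective

variable {E : Type*} [AddCommGroup E] [Module ℝ E]

lemma inv_smul_add_smul_eq {t u a b : ℝ} (ht : t ≠ 0) (hu : u ≠ 0) (hr : a * t + b * u ≠ 0)
    (x y : E) :
    (a * t + b * u)⁻¹ • (a • x + b • y) =
      (a * t / (a * t + b * u)) • (t⁻¹ • x) + (b * u / (a * t + b * u)) • (u⁻¹ • y) := by
  simp only [smul_smul, smul_add]
  congr 2 <;> field_simp

theorem ConcaveOn.perspective {s : Set E} {f : E → ℝ} (hf : ConcaveOn ℝ s f) :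
    ConcaveOn ℝ {p : E × ℝ | 0 < p.2 ∧ p.2⁻¹ • p.1 ∈ s} (fun p => p.2 * f (p.2⁻¹ • p.1)) := by
  refine ⟨?_, ?_⟩ <;>
  ( rintro ⟨x, t⟩ ⟨ht, hxs⟩ ⟨y, u⟩ ⟨hu, hys⟩ a b ha hb hab
    have hr : 0 < a * t + b * u := convex_Ioi (0 : ℝ) ht hu ha hb hab
    have hw₁ : 0 ≤ a * t / (a * t + b * u) := by positivity
    have hw₂ : 0 ≤ b * u / (a * t + b * u) := by positivity
    have hw : a * t / (a * t + b * u) + b * u / (a * t + b * u) = 1 := by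
      rw [← add_div, div_self hr.ne']
    simp only [Prod.smul_mk, Prod.mk_add_mk, smul_eq_mul, mem_ofPred_eq]
    rw [inv_smul_add_smul_eq ht.ne' hu.ne' hr.ne'] )
  · exact ⟨hr, hf.1 hxs hys hw₁ hw₂ hw⟩
  · calc a * (t * f (t⁻¹ • x)) + b * (u * f (u⁻¹ • y))
        = (a * t + b * u) * (a * t / (a * t + b * u) * f (t⁻¹ • x) +
            b * u / (a * t + b * u) * f (u⁻¹ • y)) := by field_simp
      _ ≤ (a * t + b * u) * f ((a * t / (a * t + b * u)) • (t⁻¹ • x) +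
            (b * u / (a * t + b * u)) • (u⁻¹ • y)) :=
        mul_le_mul_of_nonneg_left (hf.2 hxs hys hw₁ hw₂ hw) hr.le

end Perspective

lemma concaveOn_log_one_add_mul (c : ℝ) :
    ConcaveOn ℝ {u : ℝ | 0 < 1 + c * u} (fun u => Real.log (1 + c * u)) :=
  strictConcaveOn_log_Ioi.concaveOn.comp_affineMap
    ((AffineMap.const ℝ ℝ (1 : ℝ)) + c • AffineMap.id ℝ ℝ)

lemma lineMap_zero_one_one_zero (τ : ℝ) :
    AffineMap.lineMap ((0 : ℝ), (1 : ℝ)) (1, 0) τ = (τ, 1 - τ) := by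
  ext <;> simp [AffineMap.lineMap_apply_module]

theorem stmt13 (η h PA N0 : ℝ) (hη : 0 < η) (hh : 0 < h)
    (hPA : 0 < PA) (hN0 : 0 < N0) :
    ConcaveOn ℝ (Set.Ioo (0 : ℝ) 1)
      (fun τD : ℝ =>
        (1 - τD) * Real.log (1 + (h * η * h * PA * τD) / (N0 * (1 - τD)))) := by
  have hR := (concaveOn_log_one_add_mul (h * η * h * PA / N0)).perspective.comp_affineMap
    (AffineMap.lineMap ((0 : ℝ), (1 : ℝ)) (1, 0))
  refine (hR.subset ?_ (convex_Ioo 0 1)).congr ?_ <;>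
    rintro τ ⟨hτ₀, hτ₁⟩ <;>
    simp only [mem_preimage, Function.comp_apply, lineMap_zero_one_one_zero, mem_ofPred_eq,
      smul_eq_mul]
  · have : 0 < 1 - τ := sub_pos.2 hτ₁
    exact ⟨this, by positivity⟩
  · have : 1 - τ ≠ 0 := (sub_pos.2 hτ₁).ne'
    congr 3
    field_simp
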